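/- Let W ∈ ℝ^{n×n} be a mixing matrix with mixing rate α ∈ [0,1), let η ∈ ℝ, let S ≥ 1 be an integer, and let u^0, …, u^S and v^0, …, v^{S−1} be vectors in ℝ^{nd} satisfying u^s = (W ⊗ I_d)(u^{s−1} − η·v^{s−1}) for all 1 ≤ s ≤ S. Then ‖u^S − 1_n ⊗ ū^S‖₂² ≤ (2α²/(1+α²))^S·‖u^0 − 1_n ⊗ ū^0‖₂² + (2α²η²/(1−α²))·Σ_{s=0}^{S−1} ‖v^s − 1_n ⊗ v̄^s‖₂², where ū^s, v̄^s denote block averages. -/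

import Mathlib

/-!
With `J = (1/n) 1ₙ1ₙᵀ`, the deviation `x − 1ₙ ⊗ x̄` is `((I − J) ⊗ I_d) x`. Double stochasticity of
`W` gives `WJ = JW = J`, hence `(I − J) W = W − J = (W − J)(I − J)`: the deviation after one step
is `(W − J) ⊗ I_d` applied to the previous deviation, so it contracts by `α = ‖W − J‖`. Young's
inequality with weight `β = (1 − α²)/(1 + α²)` then bounds the squared deviations `e_s` of `u^s`
in terms of those, `g_s`, of `v^s`: `e_s ≤ (2α²/(1+α²)) e_{s−1} + (2α²η²/(1−α²)) g_{s−1}`.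
Unrolling this recursion, whose rate is at most `1`, gives the bound.
-/

open Finset

noncomputable section

/-- `ℝ^d` as a Euclidean space. -/
abbrev Vec (d : ℕ) := EuclideanSpace ℝ (Fin d)

/-- `ℝ^{nd}` as a stack of `n` blocks in `ℝ^d`, with the Euclidean (ℓ₂) norm. -/
abbrev Stacked (n d : ℕ) := PiLp 2 (fun _ : Fin n => Vec d)

/-- Block average `x̄ = (1/n) Σᵢ xᵢ` of a stacked vector. -/
def blockAvg {n d : ℕ} (x : Stacked n d) : Vec d := (n : ℝ)⁻¹ • ∑ i, x i

/-- The stacked vector `1ₙ ⊗ y` whose every block equals `y`. -/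
def stack (n : ℕ) {d : ℕ} (y : Vec d) : Stacked n d := WithLp.toLp 2 (fun _ => y)

/-- Action of `W ⊗ I_d` on a stacked vector. -/
def kronApply {n d : ℕ} (W : Matrix (Fin n) (Fin n) ℝ) (x : Stacked n d) : Stacked n d :=
  WithLp.toLp 2 (fun i => ∑ j, W i j • x j)

/-- A mixing matrix: `W·1ₙ = 1ₙ` and `Wᵀ·1ₙ = 1ₙ`. -/
def IsMixing {n : ℕ} (W : Matrix (Fin n) (Fin n) ℝ) : Prop :=
  W.mulVec (fun _ => 1) = (fun _ => 1) ∧ Matrix.vecMul (fun _ => 1) W = (fun _ => 1)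

/-- The mixing rate `α = ‖W − (1/n)1ₙ1ₙᵀ‖_op` (ℓ₂ operator norm). -/
def mixingRate {n : ℕ} (W : Matrix (Fin n) (Fin n) ℝ) : ℝ :=
  ‖LinearMap.toContinuousLinearMap
    (Matrix.toEuclideanLin (W - (n : ℝ)⁻¹ • Matrix.of fun _ _ => (1 : ℝ)))‖

lemma norm_sub_sq_le_of_pos {E : Type*} [SeminormedAddCommGroup E] (a b : E) {β : ℝ}
    (hβ : 0 < β) :
    ‖a - b‖ ^ 2 ≤ (1 + β) * ‖a‖ ^ 2 + (1 + β⁻¹) * ‖b‖ ^ 2 := by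
  have hsq : β * ‖a‖ ^ 2 + β⁻¹ * ‖b‖ ^ 2 - 2 * (‖a‖ * ‖b‖) = β⁻¹ * (β * ‖a‖ - ‖b‖) ^ 2 := by
    field_simp
    ring
  have hamgm : 0 ≤ β⁻¹ * (β * ‖a‖ - ‖b‖) ^ 2 := by positivity
  have htri : ‖a - b‖ ^ 2 ≤ (‖a‖ + ‖b‖) ^ 2 := by
    gcongr
    exact norm_sub_le a b
  linarith

lemma le_pow_mul_add_mul_sum_of_le_mul_add {e g : ℕ → ℝ} {ρ c : ℝ} (hρ₀ : 0 ≤ ρ) (hρ₁ : ρ ≤ 1)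
    (hc : 0 ≤ c) (hg : ∀ s, 0 ≤ g s) {S : ℕ} (hstep : ∀ s < S, e (s + 1) ≤ ρ * e s + c * g s) :
    e S ≤ ρ ^ S * e 0 + c * ∑ s ∈ range S, g s := by
  induction S with
  | zero => simp
  | succ S ih =>
    have hprev := ih fun s hs => hstep s (by omega)
    have hsum : 0 ≤ c * ∑ s ∈ range S, g s := mul_nonneg hc (sum_nonneg fun s _ => hg s)
    calc e (S + 1) ≤ ρ * e S + c * g S := hstep S (by omega)
      _ ≤ ρ * (ρ ^ S * e 0 + c * ∑ s ∈ range S, g s) + c * g S := by gcongr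
      _ ≤ ρ ^ (S + 1) * e 0 + c * ∑ s ∈ range (S + 1), g s := by
        have hshrink := mul_le_of_le_one_left hsum hρ₁
        rw [sum_range_succ, pow_succ]
        linarith

section Consensus

variable {n d : ℕ}

def avgMatrix (n : ℕ) : Matrix (Fin n) (Fin n) ℝ := (n : ℝ)⁻¹ • Matrix.of fun _ _ => 1

def blockDeviation (x : Stacked n d) : Stacked n d := x - stack n (blockAvg x)

def blockColumn (x : Stacked n d) (k : Fin d) : EuclideanSpace ℝ (Fin n) :=
  WithLp.toLp 2 fun j => x j k

lemma kronApply_apply (M : Matrix (Fin n) (Fin n) ℝ) (x : Stacked n d) (i : Fin n) :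
    kronApply M x i = ∑ j, M i j • x j := rfl

lemma kronApply_mul (A B : Matrix (Fin n) (Fin n) ℝ) (x : Stacked n d) :
    kronApply (A * B) x = kronApply A (kronApply B x) := by
  ext i k
  simp [kronApply_apply, Matrix.mul_apply, sum_smul, smul_sum, mul_smul]
  exact sum_comm

lemma kronApply_one (x : Stacked n d) : kronApply 1 x = x := by
  ext i k
  simp [kronApply_apply, Matrix.one_apply]

lemma kronApply_sub (A B : Matrix (Fin n) (Fin n) ℝ) (x : Stacked n d) :
    kronApply (A - B) x = kronApply A x - kronApply B x := by
  ext i k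
  simp [kronApply_apply, sub_smul]

lemma kronApply_avgMatrix (x : Stacked n d) : kronApply (avgMatrix n) x = stack n (blockAvg x) := by
  ext i k
  simp [kronApply_apply, avgMatrix, stack, blockAvg, mul_sum]

lemma blockDeviation_eq_kronApply (x : Stacked n d) :
    blockDeviation x = kronApply (1 - avgMatrix n) x := by
  rw [kronApply_sub, kronApply_one, kronApply_avgMatrix, blockDeviation]

lemma avgMatrix_mul_self : avgMatrix n * avgMatrix n = avgMatrix n := by
  ext i j
  have hn : (n : ℝ) ≠ 0 := Nat.cast_ne_zero.mpr (Fin.pos i).ne'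
  simp [avgMatrix, Matrix.mul_apply]
  field_simp

lemma blockDeviation_sub_smul (p q : Stacked n d) (η : ℝ) :
    blockDeviation (p - η • q) = blockDeviation p - η • blockDeviation q := by
  ext i k
  simp [blockDeviation, blockAvg, stack, sum_sub_distrib, ← smul_sum]
  ring

lemma norm_sq_eq_sum_blockColumn (x : Stacked n d) :
    ‖x‖ ^ 2 = ∑ k, ‖blockColumn x k‖ ^ 2 := by
  simp only [EuclideanSpace.norm_sq_eq, PiLp.norm_sq_eq_of_L2, blockColumn]
  exact sum_comm

lemma blockColumn_kronApply (M : Matrix (Fin n) (Fin n) ℝ) (x : Stacked n d) (k : Fin d) :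
    blockColumn (kronApply M x) k = Matrix.toEuclideanLin M (blockColumn x k) := by
  ext i
  simp [blockColumn, kronApply_apply, Matrix.mulVec, dotProduct]

lemma norm_kronApply_le (M : Matrix (Fin n) (Fin n) ℝ) (x : Stacked n d) :
    ‖kronApply M x‖ ≤ ‖LinearMap.toContinuousLinearMap (Matrix.toEuclideanLin M)‖ * ‖x‖ := by
  rw [← pow_le_pow_iff_left₀ (norm_nonneg _) (by positivity) two_ne_zero, mul_pow,
    norm_sq_eq_sum_blockColumn, norm_sq_eq_sum_blockColumn, mul_sum]
  gcongr with k
  rw [blockColumn_kronApply, ← mul_pow]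
  gcongr
  exact (LinearMap.toContinuousLinearMap (Matrix.toEuclideanLin M)).le_opNorm _

namespace IsMixing

variable {W : Matrix (Fin n) (Fin n) ℝ}

lemma mul_avgMatrix (hW : IsMixing W) : W * avgMatrix n = avgMatrix n := by
  ext i j
  have hrow : ∑ k, W i k = 1 := by simpa [Matrix.mulVec, dotProduct] using congrFun hW.1 i
  simp [avgMatrix, Matrix.mul_apply, ← sum_mul, hrow]

lemma avgMatrix_mul (hW : IsMixing W) : avgMatrix n * W = avgMatrix n := by
  ext i j
  have hcol : ∑ k, W k j = 1 := by simpa [Matrix.vecMul, dotProduct] using congrFun hW.2 j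
  simp [avgMatrix, Matrix.mul_apply, ← mul_sum, hcol]

lemma blockDeviation_kronApply (hW : IsMixing W) (x : Stacked n d) :
    blockDeviation (kronApply W x) = kronApply (W - avgMatrix n) (blockDeviation x) := by
  simp only [blockDeviation_eq_kronApply, ← kronApply_mul, sub_mul, mul_sub, one_mul, mul_one,
    hW.mul_avgMatrix, hW.avgMatrix_mul, avgMatrix_mul_self, sub_self, sub_zero]

lemma norm_blockDeviation_kronApply_le (hW : IsMixing W) (x : Stacked n d) :
    ‖blockDeviation (kronApply W x)‖ ≤ mixingRate W * ‖blockDeviation x‖ := by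
  rw [hW.blockDeviation_kronApply]
  exact norm_kronApply_le _ _

lemma norm_blockDeviation_sq_le (hW : IsMixing W) {α : ℝ}
    (hα : α = mixingRate W) (hα1 : α < 1) (p q : Stacked n d) (η : ℝ) :
    ‖blockDeviation (kronApply W (p - η • q))‖ ^ 2 ≤
      2 * α ^ 2 / (1 + α ^ 2) * ‖blockDeviation p‖ ^ 2
        + 2 * α ^ 2 * η ^ 2 / (1 - α ^ 2) * ‖blockDeviation q‖ ^ 2 := by
  have hα0 : 0 ≤ α := hα ▸ norm_nonneg _
  have hminus : 0 < 1 - α ^ 2 := by nlinarith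
  have hplus : 0 < 1 + α ^ 2 := by positivity
  have hβ : 0 < (1 - α ^ 2) / (1 + α ^ 2) := div_pos hminus hplus
  calc ‖blockDeviation (kronApply W (p - η • q))‖ ^ 2
      ≤ α ^ 2 * ‖blockDeviation p - η • blockDeviation q‖ ^ 2 := by
        rw [← mul_pow, ← blockDeviation_sub_smul, hα]
        gcongr
        exact hW.norm_blockDeviation_kronApply_le _
    _ ≤ α ^ 2 * ((1 + (1 - α ^ 2) / (1 + α ^ 2)) * ‖blockDeviation p‖ ^ 2
          + (1 + ((1 - α ^ 2) / (1 + α ^ 2))⁻¹) * ‖η • blockDeviation q‖ ^ 2) := by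
        gcongr
        exact norm_sub_sq_le_of_pos _ _ hβ
    _ = _ := by
        rw [norm_smul, mul_pow, Real.norm_eq_abs, sq_abs]
        field_simp [hminus.ne', hplus.ne']
        ring

end IsMixing

end Consensus

theorem consensus_error_telescoped_general {n d : ℕ} (W : Matrix (Fin n) (Fin n) ℝ) (α : ℝ)
    (hW : IsMixing W) (hα : α = mixingRate W) (hα1 : α ∈ Set.Ico (0 : ℝ) 1)
    (η : ℝ) (S : ℕ) (u v : ℕ → Stacked n d)
    (hupd : ∀ s, 1 ≤ s → s ≤ S → u s = kronApply W (u (s - 1) - η • v (s - 1))) :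
    ‖u S - stack n (blockAvg (u S))‖ ^ 2 ≤
      (2 * α ^ 2 / (1 + α ^ 2)) ^ S * ‖u 0 - stack n (blockAvg (u 0))‖ ^ 2
      + (2 * α ^ 2 * η ^ 2 / (1 - α ^ 2)) *
          ∑ s ∈ Finset.range S, ‖v s - stack n (blockAvg (v s))‖ ^ 2 := by
  obtain ⟨hα0, hα_lt⟩ := hα1
  have hα2 : α ^ 2 < 1 := by nlinarith
  refine le_pow_mul_add_mul_sum_of_le_mul_add (e := fun s => ‖blockDeviation (u s)‖ ^ 2)
    (g := fun s => ‖blockDeviation (v s)‖ ^ 2) (by positivity) ?_ ?_ (fun s => sq_nonneg _) ?_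
  · rw [div_le_one (by positivity)]
    linarith
  · exact div_nonneg (by positivity) (by linarith)
  · intro s hs
    rw [hupd (s + 1) le_add_self hs, Nat.add_sub_cancel]
    exact hW.norm_blockDeviation_sq_le hα hα_lt _ _ η

/-- If `u^s = (W ⊗ I_d)(u^{s−1} − η·v^{s−1})` for `1 ≤ s ≤ S`, then
`‖u^S − 1ₙ⊗ū^S‖² ≤ (2α²/(1+α²))^S ‖u⁰ − 1ₙ⊗ū⁰‖²
  + (2α²η²/(1−α²)) Σ_{s<S} ‖v^s − 1ₙ⊗v̄^s‖²`. -/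
theorem consensus_error_telescoped {n d : ℕ} (W : Matrix (Fin n) (Fin n) ℝ) (α : ℝ)
    (hW : IsMixing W) (hα : α = mixingRate W) (hα1 : α ∈ Set.Ico (0 : ℝ) 1)
    (η : ℝ) (S : ℕ) (hS : 1 ≤ S) (u v : ℕ → Stacked n d)
    (hupd : ∀ s, 1 ≤ s → s ≤ S → u s = kronApply W (u (s - 1) - η • v (s - 1))) :
    ‖u S - stack n (blockAvg (u S))‖ ^ 2 ≤
      (2 * α ^ 2 / (1 + α ^ 2)) ^ S * ‖u 0 - stack n (blockAvg (u 0))‖ ^ 2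
      + (2 * α ^ 2 * η ^ 2 / (1 - α ^ 2)) *
          ∑ s ∈ Finset.range S, ‖v s - stack n (blockAvg (v s))‖ ^ 2 :=
  consensus_error_telescoped_general W α hW hα hα1 η S u v hupd
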